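/- If {u_j} is a sequence of F-subharmonic functions on an open set X ⊂ ℝⁿ that decreases pointwise (u_j ≥ u_{j+1}), then the limit u = lim_j u_j is F-subharmonic on X. -/

import Mathlib

open Pointwise

/-- The 2-jet space `J² = ℝ × ℝⁿ × Sym²(ℝⁿ)`. -/
abbrev Jet2 (n : ℕ) : Type :=
  ℝ × (EuclideanSpace ℝ (Fin n) →L[ℝ] ℝ) ×
    (EuclideanSpace ℝ (Fin n) →L[ℝ] EuclideanSpace ℝ (Fin n) →L[ℝ] ℝ)

/-- The 2-jet `(φ(x), Dφ(x), D²φ(x))` of a function `φ` at `x`. -/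
noncomputable def jet {n : ℕ} (φ : EuclideanSpace ℝ (Fin n) → ℝ)
    (x : EuclideanSpace ℝ (Fin n)) : Jet2 n :=
  (φ x, fderiv ℝ φ x, fderiv ℝ (fun y => fderiv ℝ φ y) x)

/-- Viscosity `F`-subharmonicity on `X` for a `[−∞,∞)`-valued function `u`. -/
def IsFSubharmonic {n : ℕ} (F : Set (Jet2 n)) (X : Set (EuclideanSpace ℝ (Fin n)))
    (u : EuclideanSpace ℝ (Fin n) → EReal) : Prop :=
  ∀ x ∈ X, ∀ (φ : EuclideanSpace ℝ (Fin n) → ℝ) (V : Set (EuclideanSpace ℝ (Fin n))),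
    IsOpen V → x ∈ V → ContDiffOn ℝ 2 φ V →
    (∀ y ∈ V, u y ≤ (φ y : EReal)) → u x = (φ x : EReal) → jet φ x ∈ F

/-! Replace the test function `φ` by `ψ = φ + ε‖· - x₀‖²`, so that `u ≤ ψ` near `x₀` with a
quadratic gap away from `x₀`. On a small closed ball, `u j - ψ` attains its maximum `m j ≥ 0` at
some `xs j`. A Dini argument for the decreasing upper semicontinuous `u j` shows `m j → 0` and
`xs j → x₀`, so `ψ + m j` touches `u j` from above at `xs j` and `jet ψ (xs j) + (m j, 0, 0) ∈ F`.
Since `F` is closed, `jet ψ x₀ ∈ F`; letting `ε → 0` gives `jet φ x₀ ∈ F`. -/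

open Filter Topology Metric

set_option synthInstance.maxHeartbeats 100000

section Semicontinuity

variable {α : Type*} [TopologicalSpace α]

theorem IsCompact.eventually_forall_lt_of_iInf_lt {ι β : Type*} [Preorder ι]
    [CompleteLinearOrder β] [DenselyOrdered β] {K : Set α} (hK : IsCompact K)
    {u : ι → α → β} (husc : ∀ j, UpperSemicontinuousOn (u j) K)
    (hdec : ∀ x, Antitone fun j => u j x) {w : α → β} (hw : LowerSemicontinuousOn w K)
    (hlt : ∀ y ∈ K, ⨅ j, u j y < w y) : ∀ᶠ j in atTop, ∀ y ∈ K, u j y < w y := by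
  refine hK.induction_on (p := fun s => ∀ᶠ j in atTop, ∀ y ∈ s, u j y < w y)
    (by simp) (fun s t hst ht => ht.mono fun j hj y hy => hj y (hst hy))
    (fun s t hs ht => (hs.and ht).mono fun j hj y hy => hy.elim (hj.1 y) (hj.2 y))
    fun x hx => ?_
  obtain ⟨j, hj⟩ := iInf_lt_iff.1 (hlt x hx)
  obtain ⟨t, hut, htw⟩ := exists_between hj
  exact ⟨{y | u j y < t ∧ t < w y}, (husc j x hx t hut).and (hw x hx t htw),
    (eventually_ge_atTop j).mono fun k hk y hy => (hdec y hk).trans_lt (hy.1.trans hy.2)⟩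

theorem UpperSemicontinuousOn.exists_le_add_eq_add {K : Set α} (hK : IsCompact K)
    {u : α → EReal} (husc : UpperSemicontinuousOn u K) (hfin : ∀ y ∈ K, u y ≠ ⊤)
    {ψ : α → ℝ} (hψ : ContinuousOn ψ K) {x₀ : α} (hx₀ : x₀ ∈ K) (hψu : (ψ x₀ : EReal) ≤ u x₀) :
    ∃ x ∈ K, ∃ m : ℝ, 0 ≤ m ∧ (∀ y ∈ K, u y ≤ ((ψ y + m : ℝ) : EReal)) ∧
      u x = ((ψ x + m : ℝ) : EReal) := by
  set g : α → EReal := fun y => u y + ((-ψ y : ℝ) : EReal)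
  have hg : UpperSemicontinuousOn g K :=
    husc.add' (continuous_coe_real_ereal.comp_continuousOn hψ.neg).upperSemicontinuousOn
      fun y _ => EReal.continuousAt_add (Or.inr (EReal.coe_ne_bot _)) (Or.inr (EReal.coe_ne_top _))
  obtain ⟨x, hxK, hmax⟩ := hg.exists_isMaxOn ⟨x₀, hx₀⟩ hK
  have hg_le_coe : ∀ y (c : ℝ), g y ≤ c → u y ≤ ((ψ y + c : ℝ) : EReal) := by
    intro y c hy
    induction h : u y using EReal.rec with
    | bot => exact bot_le
    | coe a =>
      simp only [g, h, ← EReal.coe_add, EReal.coe_le_coe_iff] at hy ⊢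
      linarith
    | top => simp [g, h] at hy
  have hgx : (0 : EReal) ≤ g x := by
    refine le_trans ?_ (hmax hx₀)
    have h := add_le_add_left hψu ((-ψ x₀ : ℝ) : EReal)
    rwa [← EReal.coe_add, add_neg_cancel, EReal.coe_zero] at h
  obtain ⟨a, ha⟩ : ∃ a : ℝ, u x = a := by
    refine ⟨(u x).toReal, (EReal.coe_toReal (hfin x hxK) fun hbot => ?_).symm⟩
    simp [g, hbot] at hgx
  have hgx_eq : g x = ((a - ψ x : ℝ) : EReal) := by simp [g, ha, sub_eq_add_neg]
  refine ⟨x, hxK, a - ψ x, ?_, fun y hy => hg_le_coe y _ ((hmax hy).trans hgx_eq.le), ?_⟩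
  · exact_mod_cast hgx_eq ▸ hgx
  · rw [ha]; ring_nf

theorem tendsto_contact_of_iInf_le_sub_sq {α : Type*} [PseudoMetricSpace α] {K : Set α}
    (hK : IsCompact K) {u : ℕ → α → EReal} (husc : ∀ j, UpperSemicontinuousOn (u j) K)
    (hdec : ∀ x, Antitone fun j => u j x) {ψ : α → ℝ} (hψ : ContinuousOn ψ K) {x₀ : α}
    {ε : ℝ} (hε : 0 < ε) (hle : ∀ y ∈ K, ⨅ j, u j y ≤ ((ψ y - ε * dist y x₀ ^ 2 : ℝ) : EReal))
    {xs : ℕ → α} (hxs : ∀ j, xs j ∈ K) {m : ℕ → ℝ} (hm : ∀ j, 0 ≤ m j)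
    (hum : ∀ j, u j (xs j) = ((ψ (xs j) + m j : ℝ) : EReal)) :
    Tendsto m atTop (𝓝 0) ∧ Tendsto xs atTop (𝓝 x₀) := by
  have hsmall : ∀ c > 0, ∀ᶠ j in atTop, m j + ε * dist (xs j) x₀ ^ 2 < c := by
    intro c hc
    have hw : ContinuousOn (fun y => ψ y - ε * dist y x₀ ^ 2 + c) K :=
      (hψ.sub ((continuous_dist.comp (continuous_id.prodMk continuous_const)).pow 2
        |>.const_smul ε).continuousOn).add continuousOn_const
    filter_upwards [hK.eventually_forall_lt_of_iInf_lt husc hdec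
      (continuous_coe_real_ereal.comp_continuousOn hw).lowerSemicontinuousOn
      fun y hy => (hle y hy).trans_lt (EReal.coe_lt_coe_iff.2 (by linarith))] with j hj
    have h := hj (xs j) (hxs j)
    rw [hum, Function.comp_apply, EReal.coe_lt_coe_iff] at h
    linarith
  refine ⟨Metric.tendsto_nhds.2 fun c hc => ?_, Metric.tendsto_nhds.2 fun c hc => ?_⟩
  · filter_upwards [hsmall c hc] with j hj
    rw [Real.dist_0_eq_abs, abs_of_nonneg (hm j)]
    nlinarith [hm j]
  · filter_upwards [hsmall (ε * c ^ 2) (by positivity)] with j hj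
    have hsq : dist (xs j) x₀ ^ 2 < c ^ 2 := by nlinarith [hm j]
    exact (pow_lt_pow_iff_left₀ dist_nonneg hc.le two_ne_zero).1 hsq

end Semicontinuity

section Jets

variable {n : ℕ}

-- Instance search does not find this through the space of continuous bilinear maps.
instance : ContinuousAdd (Jet2 n) :=
  @IsTopologicalAddGroup.toContinuousAdd (Jet2 n) _ Prod.instAddGroup inferInstance

theorem jet_add_const (φ : EuclideanSpace ℝ (Fin n) → ℝ) (c : ℝ) (x : EuclideanSpace ℝ (Fin n)) :
    jet (fun y => φ y + c) x = jet φ x + (c, 0, 0) := by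
  simp only [jet, fderiv_add_const, Prod.mk_add_mk, add_zero]
  exact congrArg _ (congrArg _ (add_zero _).symm)

theorem jet_const_smul (c : ℝ) (φ : EuclideanSpace ℝ (Fin n) → ℝ) (x : EuclideanSpace ℝ (Fin n)) :
    jet (c • φ) x = c • jet φ x := by
  unfold jet
  rw [fderiv_const_smul_field]
  change ((c • φ) x, (c • fderiv ℝ φ) x, fderiv ℝ (c • fderiv ℝ φ) x) = _
  rw [fderiv_const_smul_field (f := fderiv ℝ φ)]
  rfl

theorem jet_add {φ χ : EuclideanSpace ℝ (Fin n) → ℝ} {x : EuclideanSpace ℝ (Fin n)}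
    (hφ : ContDiffAt ℝ 2 φ x) (hχ : ContDiffAt ℝ 2 χ x) : jet (φ + χ) x = jet φ x + jet χ x := by
  have hfderiv : fderiv ℝ (φ + χ) =ᶠ[𝓝 x] fderiv ℝ φ + fderiv ℝ χ := by
    filter_upwards [hφ.eventually (by simp), hχ.eventually (by simp)] with y hφy hχy
    exact fderiv_add (hφy.differentiableAt two_ne_zero) (hχy.differentiableAt two_ne_zero)
  have hD (f : EuclideanSpace ℝ (Fin n) → ℝ) (hf : ContDiffAt ℝ 2 f x) :
      DifferentiableAt ℝ (fderiv ℝ f) x :=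
    (hf.fderiv_right (m := 1) le_rfl).differentiableAt one_ne_zero
  simp only [jet, Prod.mk_add_mk]
  rw [hfderiv.eq_of_nhds, hfderiv.fderiv_eq, fderiv_add (hD φ hφ) (hD χ hχ)]
  rfl

theorem ContDiffOn.continuousOn_jet {φ : EuclideanSpace ℝ (Fin n) → ℝ}
    {V : Set (EuclideanSpace ℝ (Fin n))} (hφ : ContDiffOn ℝ 2 φ V) (hV : IsOpen V) :
    ContinuousOn (jet φ) V :=
  hφ.continuousOn.prodMk ((hφ.continuousOn_fderiv_of_isOpen hV (by norm_num)).prodMk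
    ((hφ.fderiv_of_isOpen hV (m := 1) le_rfl).continuousOn_fderiv_of_isOpen hV le_rfl))

theorem tendsto_add_smul_nhdsGT_zero (a b : Jet2 n) :
    Tendsto (fun ε : ℝ => a + ε • b) (𝓝[>] 0) (𝓝 a) := by
  have h : Tendsto (fun ε : ℝ => a + ε • b) (𝓝 0) (𝓝 (a + (0 : ℝ) • b)) :=
    tendsto_const_nhds.add (tendsto_id.smul_const b)
  have hzero : a + (0 : ℝ) • b = a := by ext <;> simp
  rw [hzero] at h
  exact h.mono_left nhdsWithin_le_nhds

end Jets

theorem jet_mem_of_iInf_le_sub_sq {n : ℕ} {F : Set (Jet2 n)} (hF : IsClosed F)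
    {X : Set (EuclideanSpace ℝ (Fin n))} {u : ℕ → EuclideanSpace ℝ (Fin n) → EReal}
    (husc : ∀ j, UpperSemicontinuousOn (u j) X) (hfin : ∀ j x, u j x ≠ ⊤)
    (hdec : ∀ x, Antitone fun j => u j x) (hsub : ∀ j, IsFSubharmonic F X (u j))
    {x₀ : EuclideanSpace ℝ (Fin n)} {r : ℝ} (hr : 0 < r) (hrX : closedBall x₀ r ⊆ X)
    {V : Set (EuclideanSpace ℝ (Fin n))} (hV : IsOpen V) (hrV : closedBall x₀ r ⊆ V)
    {ψ : EuclideanSpace ℝ (Fin n) → ℝ} (hψ : ContDiffOn ℝ 2 ψ V) {ε : ℝ} (hε : 0 < ε)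
    (hle : ∀ y ∈ closedBall x₀ r, ⨅ j, u j y ≤ ((ψ y - ε * ‖y - x₀‖ ^ 2 : ℝ) : EReal))
    (heq : ⨅ j, u j x₀ = ψ x₀) : jet ψ x₀ ∈ F := by
  have hK : IsCompact (closedBall x₀ r) := isCompact_closedBall x₀ r
  have hx₀K : x₀ ∈ closedBall x₀ r := mem_closedBall_self hr.le
  have huscK : ∀ j, UpperSemicontinuousOn (u j) (closedBall x₀ r) := fun j => (husc j).mono hrX
  have hψK : ContinuousOn ψ (closedBall x₀ r) := hψ.continuousOn.mono hrV
  choose xs hxsK m hm hum_le hum using fun j =>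
    (huscK j).exists_le_add_eq_add hK (fun y _ => hfin j y) hψK hx₀K (heq ▸ iInf_le _ j)
  obtain ⟨hm_lim, hxs_lim⟩ := tendsto_contact_of_iInf_le_sub_sq hK huscK hdec hψK hε
    (by simpa only [dist_eq_norm] using hle) hxsK hm hum
  have hF_eventually : ∀ᶠ j in atTop, jet ψ (xs j) + (m j, 0, 0) ∈ F := by
    filter_upwards [hxs_lim.eventually (isOpen_ball.mem_nhds (mem_ball_self hr))] with j hj
    rw [← jet_add_const]
    exact hsub j (xs j) (hrX (ball_subset_closedBall hj)) _ (ball x₀ r) isOpen_ball hj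
      ((hψ.mono (ball_subset_closedBall.trans hrV)).add contDiffOn_const)
      (fun y hy => hum_le j y (ball_subset_closedBall hy)) (hum j)
  have hjet_lim : Tendsto (fun j => jet ψ (xs j) + (m j, 0, 0)) atTop (𝓝 (jet ψ x₀ + 0)) :=
    (((hψ.continuousOn_jet hV).continuousAt (hV.mem_nhds (hrV hx₀K))).tendsto.comp hxs_lim).add
      (hm_lim.prodMk_nhds tendsto_const_nhds)
  rw [add_zero (jet ψ x₀)] at hjet_lim
  exact hF.mem_of_tendsto hjet_lim hF_eventually

/-- **Decreasing Sequence Property, Theorem 2.3.1(iii).** If `{u_j}` is a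
pointwise decreasing sequence of upper semicontinuous `F`-subharmonic functions on an
open set `X ⊂ ℝⁿ` (`F ⊂ J²` closed), then the pointwise limit `u = lim_j u_j = inf_j u_j`
is `F`-subharmonic on `X`. -/
theorem decreasing_limit_subharmonic (n : ℕ) (F : Set (Jet2 n)) (hF : IsClosed F)
    (X : Set (EuclideanSpace ℝ (Fin n))) (hX : IsOpen X)
    (u : ℕ → EuclideanSpace ℝ (Fin n) → EReal)
    (husc : ∀ j, UpperSemicontinuousOn (u j) X)
    (hfin : ∀ j x, u j x ≠ ⊤)
    (hdec : ∀ x, Antitone (fun j => u j x))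
    (hsub : ∀ j, IsFSubharmonic F X (u j)) :
    IsFSubharmonic F X (fun x => ⨅ j, u j x) := by
  intro x₀ hx₀ φ V hV hx₀V hφ hle heq
  obtain ⟨r, hr, hrXV⟩ : ∃ r > 0, closedBall x₀ r ⊆ X ∩ V :=
    nhds_basis_closedBall.mem_iff.1 (inter_mem (hX.mem_nhds hx₀) (hV.mem_nhds hx₀V))
  set q : EuclideanSpace ℝ (Fin n) → ℝ := fun y => ‖y - x₀‖ ^ 2
  have hq : ContDiff ℝ 2 q := (contDiff_id.sub contDiff_const).norm_sq ℝ
  have hF_pos : ∀ ε : ℝ, 0 < ε → jet φ x₀ + ε • jet q x₀ ∈ F := fun ε hε => by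
    have hεq : ContDiff ℝ 2 (ε • q) := hq.const_smul ε
    rw [← jet_const_smul, ← jet_add (hφ.contDiffAt (hV.mem_nhds hx₀V)) hεq.contDiffAt]
    refine jet_mem_of_iInf_le_sub_sq hF husc hfin hdec hsub hr (hrXV.trans Set.inter_subset_left)
      hV (hrXV.trans Set.inter_subset_right) (hφ.add hεq.contDiffOn) hε
      (fun y hy => ?_) (by simpa [q] using heq)
    simpa [q] using hle y (hrXV hy).2
  exact hF.mem_of_tendsto (tendsto_add_smul_nhdsGT_zero _ _)
    (eventually_nhdsWithin_of_forall hF_pos)
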